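/- Let [f] be a vertex in 𝒫 of rank n. Then every splitting of [f] has the form [x_i^{(n)} ∘ f] or [σ_i ∘ x_i^{(n)} ∘ f] for some i ∈ {1,…,n}, where σ_i : C(n+1) → C(n+1) acts as σ on the i-th copy of the Cantor set and as the identity elsewhere. Equivalently: for every k ∈ K_n and every i ∈ {1,…,n}, there exists j ∈ {1,…,n} such that K_{n+1} ∘ x_i^{(n)} ∘ k ∘ f equals K_{n+1} ∘ x_j^{(n)} ∘ f or K_{n+1} ∘ σ_j ∘ x_j^{(n)} ∘ f. -/

import Mathlib

/-! Basic setup: the Cantor set `Δ = ℕ → Bool` and `C n = Fin n × Δ`,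
the disjoint union of `n` copies of the Cantor set. -/

abbrev Δ : Type := ℕ → Bool
abbrev C (n : ℕ) : Type := Fin n × Δ

/-- A bijection between discrete spaces, as a homeomorphism. -/
def discHomeo {X Y : Type*} [TopologicalSpace X] [TopologicalSpace Y]
    [DiscreteTopology X] [DiscreteTopology Y] (e : X ≃ Y) : X ≃ₜ Y :=
  ⟨e, continuous_of_discreteTopology, continuous_of_discreteTopology⟩

/-- The permutation homeomorphism `p_α : C n ≃ₜ C n`, permuting the copies
of the Cantor set according to `α`. -/
def permC {n : ℕ} (α : Equiv.Perm (Fin n)) : C n ≃ₜ C n :=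
  (discHomeo α).prodCongr (Homeomorph.refl Δ)

/-- Cast between `C m` and `C n` when `m = n`. -/
def castC {m n : ℕ} (h : m = n) : C m ≃ₜ C n :=
  (discHomeo (finCongr h)).prodCongr (Homeomorph.refl Δ)

/-- `C (m + n)` is the disjoint union of `C m` and `C n` (first `m` copies,
then the remaining `n` copies). -/
def toSum (m n : ℕ) : C (m + n) ≃ₜ (C m) ⊕ (C n) :=
  ((discHomeo finSumFinEquiv.symm).prodCongr (Homeomorph.refl Δ)).trans
    (Homeomorph.sumProdDistrib)

/-- The direct sum `f ⊕ g` of homeomorphisms, acting as `f` on the first `m`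
copies (sent to the first `m'` copies) and as `g` on the last `n` copies. -/
def dsum {m m' n n' : ℕ} (f : C m ≃ₜ C m') (g : C n ≃ₜ C n') :
    C (m + n) ≃ₜ C (m' + n') :=
  ((toSum m n).trans (f.sumCongr g)).trans (toSum m' n').symm

/-- The split homeomorphism `x : C 1 ≃ₜ C 2`: a sequence starting with letter
`i` is sent to the `(i+1)`-st copy of the Cantor set, deleting the first letter. -/
def split : C 1 ≃ₜ C 2 where
  toFun p := (finTwoEquiv.symm (p.2 0), fun k => p.2 (k + 1))
  invFun p := (0, fun k => Nat.casesOn k (finTwoEquiv p.1) (fun j => p.2 j))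
  left_inv := by
    rintro ⟨i, w⟩
    refine Prod.ext (Subsingleton.elim _ _) ?_
    funext k
    cases k <;> simp
  right_inv := by
    rintro ⟨i, w⟩
    refine Prod.ext ?_ rfl
    simp
  continuous_toFun := by
    refine Continuous.prodMk ?_ ?_
    · exact Continuous.comp continuous_of_discreteTopology
        ((continuous_apply 0).comp continuous_snd)
    · exact continuous_pi fun k => (continuous_apply (k + 1)).comp continuous_snd
  continuous_invFun := by
    refine Continuous.prodMk continuous_const ?_
    refine continuous_pi fun k => ?_
    cases k with
    | zero => exact Continuous.comp continuous_of_discreteTopology continuous_fst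
    | succ j => exact (continuous_apply j).comp continuous_snd

/-- The split homeomorphism `x_i^{(n)} = id_{i-1} ⊕ x ⊕ id_{n-i} : C n ≃ₜ C (n+1)`
(with `i` zero-indexed, so `i : Fin n` splits the `(i+1)`-st copy). -/
def splitAt {n : ℕ} (i : Fin n) : C n ≃ₜ C (n + 1) :=
  ((castC (show n = (i : ℕ) + 1 + (n - 1 - i) by have := i.isLt; omega)).trans
    (dsum (dsum (Homeomorph.refl (C i)) split) (Homeomorph.refl (C (n - 1 - i))))).trans
    (castC (show (i : ℕ) + 2 + (n - 1 - i) = n + 1 by have := i.isLt; omega))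

/-- `IsForest f` says that `f : C m ≃ₜ C n` is a binary forest, i.e. a
(possibly empty) composition of split homeomorphisms.  A binary tree is a
binary forest with domain `C 1`. -/
inductive IsForest : ∀ {m n : ℕ}, (C m ≃ₜ C n) → Prop where
  | refl (m : ℕ) : IsForest (Homeomorph.refl (C m))
  | step {m n : ℕ} {f : C m ≃ₜ C n} (i : Fin n) (hf : IsForest f) :
      IsForest (f.trans (splitAt i))

/-! The Grigorchuk generators `σ, b, c, d`, defined via the Grigorchuk automaton:
on binary sequences, `σ` flips the first letter, and `b(0w)=0σ(w)`, `b(1w)=1c(w)`,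
`c(0w)=0σ(w)`, `c(1w)=1d(w)`, `d(0w)=0w`, `d(1w)=1b(w)`. -/

/-- States of the Grigorchuk automaton: the identity, `σ`, `b`, `c`, `d`. -/
inductive GS : Type | e | s | b | c | d
deriving DecidableEq

instance : Fintype GS :=
  ⟨{GS.e, GS.s, GS.b, GS.c, GS.d}, by intro x; cases x <;> simp⟩

instance : TopologicalSpace GS := ⊥
instance : DiscreteTopology GS := ⟨rfl⟩

/-- Output function of the Grigorchuk automaton. -/
def GS.out : GS → Bool → Bool
  | .s, i => !i
  | _,  i => i

/-- Transition function of the Grigorchuk automaton. -/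
def GS.step : GS → Bool → GS
  | .e, _ => .e
  | .s, _ => .e
  | .b, false => .s
  | .b, true  => .c
  | .c, false => .s
  | .c, true  => .d
  | .d, false => .e
  | .d, true  => .b

/-- The state of the automaton started in state `g` after reading `w 0, …, w (n-1)`. -/
def GS.stArr (g : GS) (w : Δ) : ℕ → GS
  | 0 => g
  | n + 1 => (GS.stArr g w n).step (w n)

/-- The action of the automaton state `g` on infinite binary sequences. -/
def GS.act (g : GS) (w : Δ) : Δ := fun n => (GS.stArr g w n).out (w n)

lemma GS.out_out : ∀ (g : GS) (i : Bool), g.out (g.out i) = i := by decide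

lemma GS.step_out : ∀ (g : GS) (i : Bool), g.step (g.out i) = g.step i := by decide

lemma GS.stArr_act (g : GS) (w : Δ) : ∀ n, GS.stArr g (GS.act g w) n = GS.stArr g w n := by
  intro n
  induction n with
  | zero => rfl
  | succ n ih => rw [GS.stArr, GS.stArr, ih, GS.act, GS.step_out]

lemma GS.act_act (g : GS) (w : Δ) : GS.act g (GS.act g w) = w := by
  funext n
  rw [GS.act, GS.stArr_act, GS.act, GS.out_out]

lemma GS.continuous_stArr (g : GS) (n : ℕ) : Continuous (fun w : Δ => GS.stArr g w n) := by
  induction n with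
  | zero => exact continuous_const
  | succ n ih =>
      exact Continuous.comp (f := fun w : Δ => ((GS.stArr g w n), w n))
        (g := fun p : GS × Bool => p.1.step p.2)
        continuous_of_discreteTopology (ih.prodMk (continuous_apply n))

lemma GS.continuous_act (g : GS) : Continuous (GS.act g) := by
  refine continuous_pi fun n => ?_
  exact Continuous.comp (f := fun w : Δ => ((GS.stArr g w n), w n))
    (g := fun p : GS × Bool => p.1.out p.2)
    continuous_of_discreteTopology ((GS.continuous_stArr g n).prodMk (continuous_apply n))

/-- The homeomorphism of the Cantor set determined by an automaton state. -/
def GS.homeo (g : GS) : Δ ≃ₜ Δ where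
  toFun := GS.act g
  invFun := GS.act g
  left_inv := GS.act_act g
  right_inv := GS.act_act g
  continuous_toFun := GS.continuous_act g
  continuous_invFun := GS.continuous_act g

/-- Lift a homeomorphism of the Cantor set to `C 1`. -/
def liftC1 (h : Δ ≃ₜ Δ) : C 1 ≃ₜ C 1 := (Homeomorph.refl (Fin 1)).prodCongr h

/-- The Grigorchuk generator `σ` (flips the first letter). -/
def gσ : C 1 ≃ₜ C 1 := liftC1 (GS.homeo .s)
/-- The Grigorchuk generator `b`. -/
def gb : C 1 ≃ₜ C 1 := liftC1 (GS.homeo .b)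
/-- The Grigorchuk generator `c`. -/
def gc : C 1 ≃ₜ C 1 := liftC1 (GS.homeo .c)
/-- The Grigorchuk generator `d`. -/
def gd : C 1 ≃ₜ C 1 := liftC1 (GS.homeo .d)

/-- The group of self-homeomorphisms of `C n`, with `(f * g) x = f (g x)`. -/
instance homeoGroup (n : ℕ) : Group (C n ≃ₜ C n) where
  mul f g := g.trans f
  one := Homeomorph.refl _
  inv := Homeomorph.symm
  mul_assoc a b c := rfl
  one_mul a := rfl
  mul_one a := rfl
  inv_mul_cancel a := Homeomorph.self_trans_symm a

/-- The first Grigorchuk group `𝒢 = ⟨σ, b, c, d⟩`. -/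
def Grig : Subgroup (C 1 ≃ₜ C 1) :=
  Subgroup.closure {gσ, gb, gc, gd}

/-- The set `K = {1, b, c, d}` of homeomorphisms of `C 1`. -/
def Kset : Set (C 1 ≃ₜ C 1) := {Homeomorph.refl (C 1), gb, gc, gd}

/-- The `n`-fold direct sum `k₁ ⊕ ⋯ ⊕ k_n` of homeomorphisms of `C 1`. -/
def dsumFam : {n : ℕ} → (Fin n → (C 1 ≃ₜ C 1)) → (C n ≃ₜ C n)
  | 0, _ => Homeomorph.refl _
  | n + 1, k => dsum (dsumFam (fun i : Fin n => k i.castSucc)) (k (Fin.last n))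

/-- The direct sum `h₁ ⊕ ⋯ ⊕ h_n` of a family of homeomorphisms
`h i : C 1 ≃ₜ C (m i)`. -/
def dsumFamH : {n : ℕ} → {m : Fin n → ℕ} → (∀ i, C 1 ≃ₜ C (m i)) →
    (C n ≃ₜ C (∑ i, m i))
  | 0, _, _ => castC (by simp)
  | n + 1, m, h =>
      (dsum (dsumFamH (fun i : Fin n => h i.castSucc)) (h (Fin.last n))).trans
        (castC (Fin.sum_univ_castSucc m).symm)

/-- The group `K_n = {p_α ∘ (k₁ ⊕ ⋯ ⊕ k_n) : α ∈ S_n, kᵢ ∈ K}`. -/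
def Kn (n : ℕ) : Set (C n ≃ₜ C n) :=
  {h | ∃ (α : Equiv.Perm (Fin n)) (k : Fin n → (C 1 ≃ₜ C 1)),
    (∀ i, k i ∈ Kset) ∧ h = (dsumFam k).trans (permC α)}

/-- `σ_j : C m ≃ₜ C m`, acting as `σ` on the `(j+1)`-st copy (zero-indexed `j`)
of the Cantor set and as the identity elsewhere. -/
def sigmaAt {m : ℕ} (j : Fin m) : C m ≃ₜ C m :=
  dsumFam (fun i => if i = j then gσ else Homeomorph.refl (C 1))

/-- Membership in the groupoid `𝔙` generated by all split homeomorphisms and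
all permutation homeomorphisms. -/
inductive InV : ∀ {m n : ℕ}, (C m ≃ₜ C n) → Prop where
  | split {n : ℕ} (i : Fin n) : InV (splitAt i)
  | perm {n : ℕ} (α : Equiv.Perm (Fin n)) : InV (permC α)
  | comp {m n p : ℕ} {f : C m ≃ₜ C n} {g : C n ≃ₜ C p} :
      InV f → InV g → InV (f.trans g)
  | inv {m n : ℕ} {f : C m ≃ₜ C n} : InV f → InV f.symm

/-- Membership in Röver's groupoid `𝔙𝒢`, generated by `𝔙` together with the
elements of the Grigorchuk group `𝒢`. -/
inductive InVG : ∀ {m n : ℕ}, (C m ≃ₜ C n) → Prop where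
  | split {n : ℕ} (i : Fin n) : InVG (splitAt i)
  | perm {n : ℕ} (α : Equiv.Perm (Fin n)) : InVG (permC α)
  | grig {g : C 1 ≃ₜ C 1} : g ∈ Grig → InVG g
  | comp {m n p : ℕ} {f : C m ≃ₜ C n} {g : C n ≃ₜ C p} :
      InVG f → InVG g → InVG (f.trans g)
  | inv {m n : ℕ} {f : C m ≃ₜ C n} : InVG f → InVG f.symm

/-- The coset `[f] = K_n f = {k ∘ f : k ∈ K_n}` of `f : C 1 ≃ₜ C n`. -/
def coset {n : ℕ} (f : C 1 ≃ₜ C n) : Set (C 1 ≃ₜ C n) :=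
  {h | ∃ k ∈ Kn n, h = f.trans k}

/-- The ambient type for vertices of the poset `𝒫`: a rank `n` together with
a set of homeomorphisms `C 1 ≃ₜ C n`. -/
def PP : Type := Σ n : ℕ, Set (C 1 ≃ₜ C n)

/-- A member of `PP` is a vertex of `𝒫` if it is the coset `[f] = K_n f` of
some `f : C 1 ≃ₜ C n` in Röver's groupoid. -/
def IsVert (v : PP) : Prop :=
  ∃ f : C 1 ≃ₜ C v.1, InVG f ∧ v.2 = coset f

/-- `w` is a splitting of `v` if `v = [f]` and `w = [x_i ∘ f]` for some
representative `f` and some index `i`. -/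
def SplittingOf (v w : PP) : Prop :=
  ∃ (n : ℕ) (f : C 1 ≃ₜ C n) (i : Fin n), InVG f ∧
    v = ⟨n, coset f⟩ ∧ w = ⟨n + 1, coset (f.trans (splitAt i))⟩

/-- `w` is an expansion of `v` (written `v ≤ w`): `w` is obtained from `v` by
a finite (possibly empty) sequence of splittings. -/
def Expansion : PP → PP → Prop := Relation.ReflTransGen SplittingOf

/-- The four possible elementary pieces `1, x, σ₁ ∘ x, x₁ ∘ x` (with their
ranks), used to define elementary expansions. -/
def elemSet : Set (Σ m : ℕ, (C 1 ≃ₜ C m)) :=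
  {⟨1, Homeomorph.refl (C 1)⟩, ⟨2, split⟩,
   ⟨2, split.trans (sigmaAt (0 : Fin 2))⟩,
   ⟨3, split.trans (splitAt (0 : Fin 2))⟩}

/-- `w` is an elementary expansion of `v`: `v = [f]` and
`w = [(u₁ ⊕ ⋯ ⊕ u_n) ∘ f]` where each `uᵢ ∈ {1, x, σ₁∘x, x₁∘x}`. -/
def ElemExp (v w : PP) : Prop :=
  ∃ (n : ℕ) (f : C 1 ≃ₜ C n) (m : Fin n → ℕ) (h : ∀ i, C 1 ≃ₜ C (m i)),
    InVG f ∧ (∀ i, (⟨m i, h i⟩ : Σ m : ℕ, (C 1 ≃ₜ C m)) ∈ elemSet) ∧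
    v = ⟨n, coset f⟩ ∧ w = ⟨∑ i, m i, coset (f.trans (dsumFamH h))⟩

/-! Write `k ∈ K_n` as a direct sum `k₁ ⊕ ⋯ ⊕ k_n` of elements of `K = {1, b, c, d}` followed by a
permutation. A split `x_i` commutes past the permutation at the cost of changing the split index
and the permutation. It commutes past the direct sum by the wreath recursion of the Grigorchuk
automaton: every element of `K` fixes the first letter, and its two sections lie in `K` again,
except that the left section of `b` and of `c` is `σ`. So `x_i ∘ k` is `κ ∘ x_j` or
`κ ∘ σ_j ∘ x_j` with `κ ∈ K_{n+1}`, and `κ` is absorbed into the coset because `K_{n+1}` is a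
group; the latter rests on `K` being closed under composition, checked on the automaton. -/

open Function

lemma Homeomorph.trans_assoc {W X Y Z : Type*} [TopologicalSpace W] [TopologicalSpace X]
    [TopologicalSpace Y] [TopologicalSpace Z] (f : W ≃ₜ X) (g : X ≃ₜ Y) (h : Y ≃ₜ Z) :
    (f.trans g).trans h = f.trans (g.trans h) := rfl

namespace GS

lemma stArr_succ_eq (g : GS) (w : Δ) (m : ℕ) :
    g.stArr w (m + 1) = (g.step (w 0)).stArr (fun k => w (k + 1)) m := by
  induction m with
  | zero => rfl
  | succ m ih => rw [stArr, ih]; rfl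

lemma act_tail (g : GS) (w : Δ) :
    (fun k => g.act w (k + 1)) = (g.step (w 0)).act (fun k => w (k + 1)) := by
  funext k
  rw [act, act, stArr_succ_eq]

lemma stArr_e (w : Δ) (m : ℕ) : GS.e.stArr w m = .e := by
  induction m with
  | zero => rfl
  | succ m ih => rw [stArr, ih]; rfl

lemma act_e (w : Δ) : GS.e.act w = w := by
  funext m
  rw [act, stArr_e]
  rfl

lemma act_act_of_rel (R : GS → GS → GS → Prop)
    (hout : ∀ g₁ g₂ g₃, R g₁ g₂ g₃ → ∀ a, g₂.out (g₁.out a) = g₃.out a)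
    (hstep : ∀ g₁ g₂ g₃, R g₁ g₂ g₃ → ∀ a, R (g₁.step a) (g₂.step (g₁.out a)) (g₃.step a))
    {g₁ g₂ g₃ : GS} (h : R g₁ g₂ g₃) (w : Δ) : g₂.act (g₁.act w) = g₃.act w := by
  have hR : ∀ m, R (g₁.stArr w m) (g₂.stArr (g₁.act w) m) (g₃.stArr w m) := by
    intro m
    induction m with
    | zero => exact h
    | succ m ih => exact hstep _ _ _ ih (w m)
  funext m
  exact hout _ _ _ (hR m) (w m)

/-- Part of the multiplication table of the states: `ProdRel g₁ g₂ g₃` records `g₂ ∘ g₁ = g₃`. -/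
def ProdRel : GS → GS → GS → Bool
  | .e, g, h | g, .e, h => g == h
  | .s, .s, .e | .b, .b, .e | .c, .c, .e | .d, .d, .e => true
  | .b, .c, .d | .c, .b, .d | .b, .d, .c | .d, .b, .c | .c, .d, .b | .d, .c, .b => true
  | _, _, _ => false

lemma act_act_of_prodRel {g₁ g₂ g₃ : GS} (h : ProdRel g₁ g₂ g₃) (w : Δ) :
    g₂.act (g₁.act w) = g₃.act w :=
  act_act_of_rel (fun g₁ g₂ g₃ => ProdRel g₁ g₂ g₃ = true) (by decide) (by decide) h w

lemma exists_prodRel : ∀ g₁ g₂ : GS, g₁ ≠ .s → g₂ ≠ .s → ∃ g₃, g₃ ≠ .s ∧ ProdRel g₁ g₂ g₃ := by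
  decide

lemma out_eq_of_ne_s : ∀ g : GS, g ≠ .s → ∀ a, g.out a = a := by decide

lemma step_true_ne_s : ∀ g : GS, g ≠ .s → g.step true ≠ .s := by decide

lemma step_false_eq : ∀ g : GS, g ≠ .s → g.step false = .e ∨ g.step false = .s := by decide

end GS

lemma liftC1_homeo_e : liftC1 (GS.homeo .e) = Homeomorph.refl (C 1) :=
  Homeomorph.ext fun p => Prod.ext rfl (GS.act_e p.2)

lemma mem_Kset_iff {h : C 1 ≃ₜ C 1} : h ∈ Kset ↔ ∃ g : GS, g ≠ .s ∧ h = liftC1 (GS.homeo g) := by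
  constructor
  · rintro (rfl | rfl | rfl | rfl)
    exacts [⟨.e, by decide, liftC1_homeo_e.symm⟩, ⟨.b, by decide, rfl⟩, ⟨.c, by decide, rfl⟩,
      ⟨.d, by decide, rfl⟩]
  · rintro ⟨g, hg, rfl⟩
    cases g
    exacts [Or.inl liftC1_homeo_e, absurd rfl hg, Or.inr (Or.inl rfl),
      Or.inr (Or.inr (Or.inl rfl)), Or.inr (Or.inr (Or.inr rfl))]

lemma trans_mem_Kset {a b : C 1 ≃ₜ C 1} (ha : a ∈ Kset) (hb : b ∈ Kset) : a.trans b ∈ Kset := by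
  obtain ⟨g₁, hg₁, rfl⟩ := mem_Kset_iff.1 ha
  obtain ⟨g₂, hg₂, rfl⟩ := mem_Kset_iff.1 hb
  obtain ⟨g₃, hg₃, h⟩ := GS.exists_prodRel g₁ g₂ hg₁ hg₂
  exact mem_Kset_iff.2
    ⟨g₃, hg₃, Homeomorph.ext fun p => Prod.ext rfl (GS.act_act_of_prodRel h p.2)⟩

lemma symm_mem_Kset {a : C 1 ≃ₜ C 1} (ha : a ∈ Kset) : a.symm ∈ Kset := by
  obtain ⟨g, hg, rfl⟩ := mem_Kset_iff.1 ha
  exact mem_Kset_iff.2 ⟨g, hg, rfl⟩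

lemma permC_apply {n : ℕ} (α : Equiv.Perm (Fin n)) (t : Fin n) (w : Δ) :
    permC α (t, w) = (α t, w) := rfl

lemma castC_apply {m n : ℕ} (h : m = n) (t : Fin m) (w : Δ) :
    castC h (t, w) = (Fin.cast h t, w) := rfl

lemma dsum_apply_castAdd {m m' n n' : ℕ} (f : C m ≃ₜ C m') (g : C n ≃ₜ C n')
    (t : Fin m) (w : Δ) :
    dsum f g (Fin.castAdd n t, w) = ((f (t, w)).1.castAdd n', (f (t, w)).2) := by
  simp [dsum, toSum, discHomeo, Homeomorph.sumCongr, Equiv.sumProdDistrib, Prod.map]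

lemma dsum_apply_natAdd {m m' n n' : ℕ} (f : C m ≃ₜ C m') (g : C n ≃ₜ C n')
    (t : Fin n) (w : Δ) :
    dsum f g (Fin.natAdd m t, w) = ((g (t, w)).1.natAdd m', (g (t, w)).2) := by
  simp [dsum, toSum, discHomeo, Homeomorph.sumCongr, Equiv.sumProdDistrib, Prod.map]

lemma dsumFam_apply {n : ℕ} (k : Fin n → (C 1 ≃ₜ C 1)) (t : Fin n) (w : Δ) :
    dsumFam k (t, w) = (t, (k t (0, w)).2) := by
  induction n with
  | zero => exact t.elim0
  | succ n ih =>
    induction t using Fin.lastCases with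
    | last =>
      have hlast : ∀ s : Fin 1, Fin.natAdd n s = Fin.last n := fun s => by
        rw [Subsingleton.elim s 0]; rfl
      simpa [dsumFam, hlast] using
        dsum_apply_natAdd (dsumFam fun i : Fin n => k i.castSucc) (k (Fin.last n)) 0 w
    | cast t =>
      exact (dsum_apply_castAdd (dsumFam fun i : Fin n => k i.castSucc) _ t w).trans
        (by rw [ih]; rfl)

lemma sigmaAt_apply {n : ℕ} (j t : Fin n) (w : Δ) :
    sigmaAt j (t, w) = (t, if t = j then GS.s.act w else w) := by
  rw [sigmaAt, dsumFam_apply]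
  split_ifs <;> rfl

lemma splitAt_apply_of_ne {n : ℕ} {i t : Fin n} (h : t ≠ i) (w : Δ) :
    splitAt i (t, w) = (i.castSucc.succAbove t, w) := by
  have hi := i.isLt
  simp only [splitAt, Homeomorph.trans_apply, castC_apply]
  rcases Fin.lt_or_lt_of_ne h with h | h
  · have ht : Fin.cast (show n = (i : ℕ) + 1 + (n - 1 - i) by omega) t
        = Fin.castAdd _ (Fin.castAdd 1 (⟨t, h⟩ : Fin i)) := by ext; simp
    rw [ht, dsum_apply_castAdd, dsum_apply_castAdd, Fin.succAbove_of_castSucc_lt _ _ (by simpa)]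
    ext <;> simp [castC_apply]
  · have ht : Fin.cast (show n = (i : ℕ) + 1 + (n - 1 - i) by omega) t
        = Fin.natAdd _ (⟨t - (i + 1), by omega⟩ : Fin (n - 1 - i)) := by
          ext; simp only [Fin.val_cast, Fin.natAdd_mk]; omega
    rw [ht, dsum_apply_natAdd, Fin.succAbove_of_le_castSucc _ _ (by simpa using h.le)]
    ext <;> simp only [Homeomorph.refl_apply, id_eq, Fin.natAdd_mk, castC_apply, Fin.cast_mk,
      Fin.val_succ]; omega

lemma splitAt_apply_self {n : ℕ} (i : Fin n) (w : Δ) :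
    splitAt i (i, w) = (bif w 0 then i.succ else i.castSucc, fun k => w (k + 1)) := by
  have hi := i.isLt
  simp only [splitAt, Homeomorph.trans_apply, castC_apply]
  have ht : Fin.cast (show n = (i : ℕ) + 1 + (n - 1 - i) by omega) i
      = Fin.castAdd _ (Fin.natAdd i (0 : Fin 1)) := by ext; simp
  rw [ht, dsum_apply_castAdd, dsum_apply_natAdd]
  cases hw : w 0 <;> ext <;> simp [split, hw, castC_apply, finTwoEquiv]

lemma dsumFam_trans_dsumFam {n : ℕ} (k k' : Fin n → (C 1 ≃ₜ C 1)) :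
    (dsumFam k).trans (dsumFam k') = dsumFam fun t => (k t).trans (k' t) :=
  Homeomorph.ext fun ⟨t, w⟩ => by
    simp only [Homeomorph.trans_apply, dsumFam_apply]
    rw [show ((0 : Fin 1), (k t (0, w)).2) = k t (0, w) from Prod.ext (Subsingleton.elim _ _) rfl]

lemma dsumFam_symm {n : ℕ} (k : Fin n → (C 1 ≃ₜ C 1)) :
    (dsumFam k).symm = dsumFam fun t => (k t).symm :=
  Homeomorph.ext fun ⟨t, w⟩ => by
    rw [Homeomorph.symm_apply_eq, dsumFam_apply, dsumFam_apply]
    rw [show ((0 : Fin 1), ((k t).symm (0, w)).2) = (k t).symm (0, w)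
      from Prod.ext (Subsingleton.elim _ _) rfl, Homeomorph.apply_symm_apply]

lemma permC_trans_dsumFam {n : ℕ} (α : Equiv.Perm (Fin n)) (k : Fin n → (C 1 ≃ₜ C 1)) :
    (permC α).trans (dsumFam k) = (dsumFam fun t => k (α t)).trans (permC α) :=
  Homeomorph.ext fun ⟨t, w⟩ => by
    simp only [Homeomorph.trans_apply, permC_apply, dsumFam_apply]

lemma trans_mem_Kn {n : ℕ} {a b : C n ≃ₜ C n} (ha : a ∈ Kn n) (hb : b ∈ Kn n) :
    a.trans b ∈ Kn n := by
  obtain ⟨α, k, hk, rfl⟩ := ha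
  obtain ⟨β, k', hk', rfl⟩ := hb
  refine ⟨α.trans β, fun t => (k t).trans (k' (α t)), fun t => trans_mem_Kset (hk t) (hk' _), ?_⟩
  calc ((dsumFam k).trans (permC α)).trans ((dsumFam k').trans (permC β))
      = (dsumFam k).trans (((permC α).trans (dsumFam k')).trans (permC β)) := rfl
    _ = ((dsumFam k).trans (dsumFam fun t => k' (α t))).trans ((permC α).trans (permC β)) := by
        rw [permC_trans_dsumFam]; rfl
    _ = _ := by rw [dsumFam_trans_dsumFam]; rfl

lemma symm_mem_Kn {n : ℕ} {a : C n ≃ₜ C n} (ha : a ∈ Kn n) : a.symm ∈ Kn n := by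
  obtain ⟨α, k, hk, rfl⟩ := ha
  refine ⟨α.symm, fun t => (k (α.symm t)).symm, fun t => symm_mem_Kset (hk _), ?_⟩
  calc ((dsumFam k).trans (permC α)).symm = (permC α.symm).trans (dsumFam k).symm := rfl
    _ = _ := by rw [dsumFam_symm, permC_trans_dsumFam]

lemma coset_trans_of_mem_Kn {n : ℕ} (f : C 1 ≃ₜ C n) {κ : C n ≃ₜ C n} (hκ : κ ∈ Kn n) :
    coset (f.trans κ) = coset f := by
  ext h
  constructor
  · rintro ⟨k, hk, rfl⟩
    exact ⟨κ.trans k, trans_mem_Kn hκ hk, rfl⟩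
  · rintro ⟨k, hk, rfl⟩
    refine ⟨κ.symm.trans k, trans_mem_Kn (symm_mem_Kn hκ) hk, Homeomorph.ext fun p => ?_⟩
    simp

lemma permC_trans_splitAt {n : ℕ} (α : Equiv.Perm (Fin n)) (i : Fin n) :
    ∃ β : Equiv.Perm (Fin (n + 1)),
      (permC α).trans (splitAt i) = (splitAt (α.symm i)).trans (permC β) := by
  set j := α.symm i
  let β : Equiv.Perm (Fin (n + 1)) := (finSuccEquiv' j.castSucc).trans
    ((Equiv.optionCongr α).trans (finSuccEquiv' i.castSucc).symm)
  have hβ_self : β j.castSucc = i.castSucc := by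
    simp [β, finSuccEquiv'_at, finSuccEquiv'_symm_none]
  have hβ_succAbove (t : Fin n) : β (j.castSucc.succAbove t) = i.castSucc.succAbove (α t) := by
    simp [β, finSuccEquiv'_succAbove, finSuccEquiv'_symm_some]
  refine ⟨β, Homeomorph.ext fun ⟨t, w⟩ => ?_⟩
  simp only [Homeomorph.trans_apply, permC_apply]
  by_cases ht : t = j
  · subst ht
    rw [α.apply_symm_apply, splitAt_apply_self, splitAt_apply_self]
    cases w 0
    · simp only [cond_false, permC_apply, hβ_self]
    · simp only [cond_true, permC_apply, ← Fin.succAbove_castSucc_self, hβ_succAbove, j,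
        α.apply_symm_apply]
  · have hαt : α t ≠ i := fun h => ht (by simp [j, ← h])
    rw [splitAt_apply_of_ne hαt, splitAt_apply_of_ne ht, permC_apply, hβ_succAbove]

def dsumStates {n : ℕ} (g : Fin n → GS) : C n ≃ₜ C n :=
  dsumFam fun t => liftC1 (GS.homeo (g t))

lemma dsumStates_apply {n : ℕ} (g : Fin n → GS) (t : Fin n) (w : Δ) :
    dsumStates g (t, w) = (t, (g t).act w) :=
  dsumFam_apply _ t w

lemma dsumStates_trans_permC_mem_Kn {n : ℕ} {g : Fin n → GS} (hg : ∀ t, g t ≠ .s)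
    (α : Equiv.Perm (Fin n)) : (dsumStates g).trans (permC α) ∈ Kn n :=
  ⟨α, _, fun t => mem_Kset_iff.2 ⟨g t, hg t, rfl⟩, rfl⟩

lemma dsumStates_eq_sigmaAt_trans {n : ℕ} {g : Fin n → GS} {j : Fin n} (hj : g j = .s) :
    dsumStates g = (sigmaAt j).trans (dsumStates (update g j .e)) :=
  Homeomorph.ext fun ⟨t, w⟩ => by
    simp only [Homeomorph.trans_apply, dsumStates_apply, sigmaAt_apply]
    by_cases ht : t = j
    · subst ht
      simp [hj, GS.act_e]
    · simp [ht]

/-- Wreath recursion: `g j ≠ s` fixes the first letter, so after the split it acts on the two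
halves of copy `j` by its sections `(g j).step false` and `(g j).step true`. -/
lemma dsumStates_trans_splitAt {n : ℕ} {g : Fin n → GS} {j : Fin n} (hj : g j ≠ .s) :
    (dsumStates g).trans (splitAt j) = (splitAt j).trans
      (dsumStates (Fin.insertNth j.castSucc ((g j).step false) (update g j ((g j).step true)))) :=
  Homeomorph.ext fun ⟨t, w⟩ => by
    simp only [Homeomorph.trans_apply, dsumStates_apply]
    by_cases ht : t = j
    · subst ht
      have hhead : (g t).act w 0 = w 0 := GS.out_eq_of_ne_s _ hj (w 0)
      rw [splitAt_apply_self, splitAt_apply_self, GS.act_tail, hhead]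
      cases w 0
      · simp only [cond_false, dsumStates_apply, Fin.insertNth_apply_same]
      · simp only [cond_true, dsumStates_apply, ← Fin.succAbove_castSucc_self,
          Fin.insertNth_apply_succAbove, update_self]
    · simp only [splitAt_apply_of_ne ht, dsumStates_apply, Fin.insertNth_apply_succAbove,
        update_of_ne ht]

lemma insertNth_update_step_true_ne_s {n : ℕ} {g : Fin n → GS} (hg : ∀ t, g t ≠ .s) (j : Fin n)
    (a : GS) {t : Fin (n + 1)} (ht : t ≠ j.castSucc) :
    (Fin.insertNth j.castSucc a (update g j ((g j).step true)) : Fin (n + 1) → GS) t ≠ .s := by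
  obtain ⟨m, rfl⟩ := Fin.exists_succAbove_eq ht
  rw [Fin.insertNth_apply_succAbove]
  by_cases hm : m = j
  · rw [hm, update_self]
    exact GS.step_true_ne_s _ (hg j)
  · rw [update_of_ne hm]
    exact hg m

lemma exists_trans_splitAt_eq {n : ℕ} {k : C n ≃ₜ C n} (hk : k ∈ Kn n) (i : Fin n) :
    ∃ j : Fin n, ∃ κ ∈ Kn (n + 1), k.trans (splitAt i) = (splitAt j).trans κ ∨
      k.trans (splitAt i) = (splitAt j).trans ((sigmaAt j.castSucc).trans κ) := by
  obtain ⟨α, kk, hkk, rfl⟩ := hk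
  choose g hg hkg using fun t => mem_Kset_iff.1 (hkk t)
  obtain ⟨β, hβ⟩ := permC_trans_splitAt α i
  set j := α.symm i
  set g' : Fin (n + 1) → GS :=
    Fin.insertNth j.castSucc ((g j).step false) (update g j ((g j).step true))
  have hcomm : ((dsumFam kk).trans (permC α)).trans (splitAt i)
      = (splitAt j).trans ((dsumStates g').trans (permC β)) := by
    have hkk_eq : dsumFam kk = dsumStates g := congrArg dsumFam (funext hkg)
    calc ((dsumFam kk).trans (permC α)).trans (splitAt i)
        = ((dsumStates g).trans (splitAt j)).trans (permC β) := by
          rw [← hkk_eq, Homeomorph.trans_assoc, hβ]; rfl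
      _ = _ := by rw [dsumStates_trans_splitAt (hg j)]; rfl
  have hg'_self : g' j.castSucc = (g j).step false := Fin.insertNth_apply_same _ _ _
  refine ⟨j, ?_⟩
  rcases GS.step_false_eq _ (hg j) with h0 | h0
  · refine ⟨_, dsumStates_trans_permC_mem_Kn (fun t => ?_) β, Or.inl hcomm⟩
    by_cases ht : t = j.castSucc
    · rw [ht, hg'_self, h0]
      decide
    · exact insertNth_update_step_true_ne_s hg j _ ht
  · refine ⟨(dsumStates (update g' j.castSucc .e)).trans (permC β),
      dsumStates_trans_permC_mem_Kn (fun t => ?_) β, Or.inr ?_⟩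
    · by_cases ht : t = j.castSucc
      · rw [ht, update_self]
        decide
      · rw [update_of_ne ht]
        exact insertNth_update_step_true_ne_s hg j _ ht
    · rw [hcomm, dsumStates_eq_sigmaAt_trans (hg'_self.trans h0)]
      rfl

theorem splitting_classification_general (n : ℕ) (f : C 1 ≃ₜ C n)
    (k : C n ≃ₜ C n) (hk : k ∈ Kn n) (i : Fin n) :
    ∃ j : Fin n,
      coset ((f.trans k).trans (splitAt i)) = coset (f.trans (splitAt j)) ∨
      coset ((f.trans k).trans (splitAt i))
        = coset (f.trans ((splitAt j).trans (sigmaAt j.castSucc))) := by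
  obtain ⟨j, κ, hκ, h | h⟩ := exists_trans_splitAt_eq hk i
  · exact ⟨j, Or.inl (by rw [Homeomorph.trans_assoc, h, ← Homeomorph.trans_assoc,
      coset_trans_of_mem_Kn _ hκ])⟩
  · exact ⟨j, Or.inr (by rw [Homeomorph.trans_assoc, h, ← Homeomorph.trans_assoc,
      ← Homeomorph.trans_assoc, coset_trans_of_mem_Kn _ hκ, Homeomorph.trans_assoc])⟩

theorem splitting_classification (n : ℕ) (f : C 1 ≃ₜ C n) (hf : InVG f)
    (k : C n ≃ₜ C n) (hk : k ∈ Kn n) (i : Fin n) :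
    ∃ j : Fin n,
      coset ((f.trans k).trans (splitAt i)) = coset (f.trans (splitAt j)) ∨
      coset ((f.trans k).trans (splitAt i))
        = coset (f.trans ((splitAt j).trans (sigmaAt j.castSucc))) :=
  splitting_classification_general n f k hk i
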